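/- arXiv:2311.00088 — 3 statements merged into one kernel-verified Lean document; each statement's English description precedes it below -/
import Mathlib

section
/- Let d ≥ 1, let f : ℝ^d → ℝ be L-smooth and satisfy the local PL condition with constants δ_f, μ > 0, let g satisfy the noise model with constant σ∞ > 0, and consider the noisy GD iterates with deterministic initial point θ_1 satisfying f(θ_1) < δ_f and fixed learning rate a satisfying a < min{1/L, 2μδ_f/(L σ∞² d)}. Then the probability of the event that there exists N > 0 with f(θ_N) ≥ δ_f while for every n < N one has f(θ_n) < δ_f and f(θ_n) > L a σ∞² d / μ, is at most f(θ_1)/δ_f. In words: with probability at least 1 − f(θ_1)/δ_f, the noisy GD iterates remain in the sublevel set f^{-1}([0, δ_f)) until they achieve a loss value ≤ L a σ∞² d / μ. -/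
open MeasureTheory ProbabilityTheory

open scoped RealInnerProductSpace ENNReal

/-!
On the good set `S = {L a σ² d / μ < f < δ_f}` one noisy step does not increase `f` in
expectation: the descent lemma for `L`-smooth `f` together with unbiasedness and the
coordinatewise variance bound gives `E f(θ - a g(θ, ξ)) ≤ f θ - (a / 2) ‖∇f θ‖² + L a² σ² d / 2`,
and the PL inequality makes the right-hand side at most `f θ`. So `f(θ_n)`, stopped when the
iterates leave `S`, is a nonnegative supermartingale, and Ville's inequality bounds the
probability of leaving through `{f ≥ δ_f}` by `f(θ_1) / δ_f`. Concretely, with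
`W_n = E[f(θ_n); θ_k ∈ S for k < n]`, independence of the fresh noise from the past gives
`δ_f P(exit at n) + W_{n+1} ≤ W_n`, which telescopes.
-/

theorem le_add_inner_gradient_add_sq {E : Type*} [NormedAddCommGroup E] [InnerProductSpace ℝ E]
    [CompleteSpace E] {f : E → ℝ} (hf : Differentiable ℝ f) {L : ℝ}
    (hsmooth : ∀ x y, ‖gradient f x - gradient f y‖ ≤ L * ‖x - y‖) (x v : E) :
    f (x + v) ≤ f x + ⟪gradient f x, v⟫ + L / 2 * ‖v‖ ^ 2 := by
  set φ : ℝ → ℝ := fun t => f (x + t • v) - t * ⟪gradient f x, v⟫ - L / 2 * t ^ 2 * ‖v‖ ^ 2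
  have hφ : ∀ t : ℝ, HasDerivAt φ
      (⟪gradient f (x + t • v) - gradient f x, v⟫ - L * t * ‖v‖ ^ 2) t := by
    intro t
    have hline : HasDerivAt (fun s : ℝ => x + s • v) v t := by
      simpa using ((hasDerivAt_id t).smul_const v).const_add x
    have hfline := (hf (x + t • v)).hasGradientAt.hasFDerivAt.comp_hasDerivAt t hline
    have := ((hfline.sub ((hasDerivAt_id t).mul_const ⟪gradient f x, v⟫)).sub
      (((hasDerivAt_pow 2 t).const_mul (L / 2)).mul_const (‖v‖ ^ 2)))
    exact this.congr_deriv
      (by simp only [InnerProductSpace.toDual_apply_apply, inner_sub_left]; ring)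
  have hanti : AntitoneOn φ (Set.Icc 0 1) := by
    refine antitoneOn_of_deriv_nonpos (convex_Icc 0 1)
      (fun t _ => (hφ t).continuousAt.continuousWithinAt)
      (fun t _ => (hφ t).differentiableAt.differentiableWithinAt) fun t ht => ?_
    rw [interior_Icc] at ht
    rw [(hφ t).deriv, sub_nonpos]
    calc ⟪gradient f (x + t • v) - gradient f x, v⟫
        ≤ ‖gradient f (x + t • v) - gradient f x‖ * ‖v‖ := real_inner_le_norm _ _
      _ ≤ L * ‖t • v‖ * ‖v‖ := by gcongr; simpa using hsmooth (x + t • v) x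
      _ = L * t * ‖v‖ ^ 2 := by rw [norm_smul, Real.norm_of_nonneg ht.1.le]; ring
  have := hanti (by simp) (by simp) zero_le_one
  simp only [φ, one_smul, zero_smul, add_zero, one_pow, one_mul, zero_mul, ne_eq,
    OfNat.ofNat_ne_zero, not_false_eq_true, zero_pow, mul_zero, sub_zero] at this
  linarith

theorem norm_sq_eq_norm_sub_sq_add {E : Type*} [NormedAddCommGroup E] [InnerProductSpace ℝ E]
    (y c : E) : ‖y‖ ^ 2 = ‖y - c‖ ^ 2 + 2 * ⟪c, y⟫ - ‖c‖ ^ 2 := by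
  rw [norm_sub_sq_real, real_inner_comm]; ring

section SecondMoment

variable {Ω E : Type*} [MeasurableSpace Ω] {P : Measure Ω} [IsProbabilityMeasure P]
  [NormedAddCommGroup E] [InnerProductSpace ℝ E] {G : Ω → E} {c : E}

theorem integrable_norm_sq_of_integrable_norm_sub_sq (hG : Integrable G P)
    (hG2 : Integrable (fun ω => ‖G ω - c‖ ^ 2) P) : Integrable (fun ω => ‖G ω‖ ^ 2) P := by
  rw [funext fun ω => norm_sq_eq_norm_sub_sq_add (G ω) c]
  exact (hG2.add ((hG.const_inner c).const_mul 2)).sub (integrable_const _)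

theorem integral_norm_sq_eq [CompleteSpace E] (hG : Integrable G P) (hmean : ∫ ω, G ω ∂P = c)
    (hG2 : Integrable (fun ω => ‖G ω - c‖ ^ 2) P) :
    ∫ ω, ‖G ω‖ ^ 2 ∂P = ‖c‖ ^ 2 + ∫ ω, ‖G ω - c‖ ^ 2 ∂P := by
  have hinner : Integrable (fun ω => 2 * ⟪c, G ω⟫) P := (hG.const_inner c).const_mul 2
  rw [funext fun ω => norm_sq_eq_norm_sub_sq_add (G ω) c,
    integral_sub (f := fun ω => ‖G ω - c‖ ^ 2 + 2 * ⟪c, G ω⟫) (hG2.add hinner) (integrable_const _),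
    integral_add hG2 hinner, integral_const_mul,
    integral_inner hG, hmean, real_inner_self_eq_norm_sq, integral_const, probReal_univ, one_smul]
  ring

end SecondMoment

section CoordinateNoise

variable {Ω ι : Type*} [MeasurableSpace Ω] {P : Measure Ω} [Fintype ι]
  {G : Ω → EuclideanSpace ℝ ι} {c : EuclideanSpace ℝ ι}

theorem norm_sub_sq_eq_sum (y c : EuclideanSpace ℝ ι) : ‖y - c‖ ^ 2 = ∑ i, |y i - c i| ^ 2 := by
  simp [EuclideanSpace.norm_sq_eq]

theorem integrable_norm_sub_sq (h : ∀ i, Integrable (fun ω => |G ω i - c i| ^ 2) P) :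
    Integrable (fun ω => ‖G ω - c‖ ^ 2) P := by
  simp_rw [norm_sub_sq_eq_sum]
  exact integrable_finsetSum _ fun i _ => h i

theorem integral_norm_sub_sq_le {σ : ℝ} (h : ∀ i, Integrable (fun ω => |G ω i - c i| ^ 2) P)
    (hvar : ∀ i, ∫ ω, |G ω i - c i| ^ 2 ∂P ≤ σ ^ 2) :
    ∫ ω, ‖G ω - c‖ ^ 2 ∂P ≤ Fintype.card ι * σ ^ 2 := by
  simp_rw [norm_sub_sq_eq_sum]
  rw [integral_finsetSum _ fun i _ => h i]
  simpa using Finset.sum_le_sum fun i (_ : i ∈ Finset.univ) => hvar i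

end CoordinateNoise

theorem lintegral_ofReal_comp_sub_smul_le {Ω E : Type*} [MeasurableSpace Ω] {P : Measure Ω}
    [IsProbabilityMeasure P] [NormedAddCommGroup E] [InnerProductSpace ℝ E] [CompleteSpace E]
    {f : E → ℝ} (hf : Differentiable ℝ f) (hfnonneg : ∀ x, 0 ≤ f x) {L : ℝ}
    (hsmooth : ∀ x y, ‖gradient f x - gradient f y‖ ≤ L * ‖x - y‖) {x : E} {G : Ω → E}
    (hG : Integrable G P) (hG2 : Integrable (fun ω => ‖G ω‖ ^ 2) P)
    (hmean : ∫ ω, G ω ∂P = gradient f x) (a : ℝ) :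
    ∫⁻ ω, ENNReal.ofReal (f (x - a • G ω)) ∂P ≤
      ENNReal.ofReal (f x - a * ‖gradient f x‖ ^ 2 + L / 2 * a ^ 2 * ∫ ω, ‖G ω‖ ^ 2 ∂P) := by
  set bound : Ω → ℝ := fun ω =>
    f x - a * ⟪gradient f x, G ω⟫ + L / 2 * a ^ 2 * ‖G ω‖ ^ 2
  have hle : ∀ ω, f (x - a • G ω) ≤ bound ω := fun ω => by
    have := le_add_inner_gradient_add_sq hf hsmooth x (-(a • G ω))
    rwa [← sub_eq_add_neg, inner_neg_right, real_inner_smul_right, norm_neg, norm_smul,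
      mul_pow, Real.norm_eq_abs, sq_abs, ← sub_eq_add_neg, ← mul_assoc] at this
  have hinner : Integrable (fun ω => a * ⟪gradient f x, G ω⟫) P :=
    (hG.const_inner _).const_mul a
  have hbound : Integrable bound P :=
    ((integrable_const _).sub hinner).add (hG2.const_mul _)
  calc ∫⁻ ω, ENNReal.ofReal (f (x - a • G ω)) ∂P
      ≤ ∫⁻ ω, ENNReal.ofReal (bound ω) ∂P :=
        lintegral_mono fun ω => ENNReal.ofReal_le_ofReal (hle ω)
    _ = ENNReal.ofReal (∫ ω, bound ω ∂P) :=
      (ofReal_integral_eq_lintegral_ofReal hbound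
        (ae_of_all _ fun ω => (hfnonneg _).trans (hle ω))).symm
    _ = _ := by
      congr 1
      rw [integral_add (f := fun ω => f x - a * ⟪gradient f x, G ω⟫)
          ((integrable_const _).sub hinner) (hG2.const_mul _),
        integral_sub (integrable_const _) hinner, integral_const_mul, integral_const_mul,
        integral_inner hG, hmean, real_inner_self_eq_norm_sq, integral_const, probReal_univ,
        one_smul]

theorem lintegral_ofReal_noisyGradientStep_le {Ω ι : Type*} [Fintype ι] [MeasurableSpace Ω]
    {P : Measure Ω} [IsProbabilityMeasure P] {f : EuclideanSpace ℝ ι → ℝ}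
    (hf : Differentiable ℝ f) (hfnonneg : ∀ x, 0 ≤ f x) {L : ℝ} (hL : 0 ≤ L)
    (hsmooth : ∀ x y, ‖gradient f x - gradient f y‖ ≤ L * ‖x - y‖) {μ σ a : ℝ} (hμ : 0 < μ)
    (ha0 : 0 < a) (haL : a * L ≤ 1) {x : EuclideanSpace ℝ ι} {G : Ω → EuclideanSpace ℝ ι}
    (hG : Integrable G P) (hmean : ∫ ω, G ω ∂P = gradient f x)
    (hvarint : ∀ i, Integrable (fun ω => |G ω i - gradient f x i| ^ 2) P)
    (hvar : ∀ i, ∫ ω, |G ω i - gradient f x i| ^ 2 ∂P ≤ σ ^ 2)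
    (hPL : 2 * μ * f x ≤ ‖gradient f x‖ ^ 2) (hx : L * a * σ ^ 2 * Fintype.card ι / μ < f x) :
    ∫⁻ ω, ENNReal.ofReal (f (x - a • G ω)) ∂P ≤ ENNReal.ofReal (f x) := by
  have hD := integrable_norm_sub_sq hvarint
  refine (lintegral_ofReal_comp_sub_smul_le hf hfnonneg hsmooth hG
    (integrable_norm_sq_of_integrable_norm_sub_sq hG hD) hmean a).trans
    (ENNReal.ofReal_le_ofReal ?_)
  rw [integral_norm_sq_eq hG hmean hD]
  have hnoise := integral_norm_sub_sq_le hvarint hvar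
  rw [div_lt_iff₀ hμ] at hx
  nlinarith [mul_le_mul_of_nonneg_left hnoise (by positivity : 0 ≤ L / 2 * a ^ 2),
    mul_le_mul_of_nonneg_left haL (by positivity : 0 ≤ a * ‖gradient f x‖ ^ 2)]

theorem lintegral_comp_eq_of_indepFun {Ω α β : Type*} {mΩ : MeasurableSpace Ω}
    [MeasurableSpace α] [MeasurableSpace β] {P : Measure Ω} [IsFiniteMeasure P]
    {Z : Ω → α} {Y : Ω → β} (hZ : Measurable Z) (hY : Measurable Y) (hZY : IndepFun Z Y P)
    {F : α → β → ℝ≥0∞} (hF : Measurable (Function.uncurry F)) :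
    ∫⁻ ω, F (Z ω) (Y ω) ∂P = ∫⁻ ω, ∫⁻ y, F (Z ω) y ∂(P.map Y) ∂P := by
  change ∫⁻ ω, Function.uncurry F (Z ω, Y ω) ∂P = _
  rw [← lintegral_map hF (hZ.prodMk hY),
    (indepFun_iff_map_prod_eq_prod_map_map hZ.aemeasurable hY.aemeasurable).1 hZY,
    lintegral_prod _ hF.aemeasurable, lintegral_map hF.lintegral_prod_right' hZ]
  rfl

theorem ENNReal.tsum_le_of_add_le {u K : ℕ → ℝ≥0∞} (h : ∀ n, u n + K (n + 1) ≤ K n) :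
    ∑' n, u n ≤ K 0 := by
  have hpartial : ∀ N, ∑ n ∈ Finset.range N, u n + K N ≤ K 0 := by
    intro N
    induction N with
    | zero => simp
    | succ N ih =>
      calc ∑ n ∈ Finset.range (N + 1), u n + K (N + 1)
          = ∑ n ∈ Finset.range N, u n + (u N + K (N + 1)) := by
            rw [Finset.sum_range_succ, add_assoc]
        _ ≤ K 0 := (add_le_add le_rfl (h N)).trans ih
  rw [ENNReal.tsum_eq_iSup_nat]
  exact iSup_le fun N => le_self_add.trans (hpartial N)

section NoiseDrivenChain

variable {Ω Ω' E : Type*} [mΩ : MeasurableSpace Ω] {ξ : ℕ → Ω' → Ω}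

abbrev noisePast (ξ : ℕ → Ω' → Ω) (n : ℕ) : MeasurableSpace Ω' :=
  ⨆ i ∈ Set.Iio n, mΩ.comap (ξ i)

theorem noisePast_mono : Monotone (noisePast ξ) :=
  fun _ _ hmn => biSup_mono fun _ hi => lt_of_lt_of_le hi hmn

theorem noisePast_le [mΩ' : MeasurableSpace Ω'] (hξ : ∀ n, Measurable (ξ n)) (n : ℕ) :
    noisePast ξ n ≤ mΩ' :=
  iSup₂_le fun i _ => (hξ i).comap_le

theorem measurable_noise_noisePast_succ (n : ℕ) : Measurable[noisePast ξ (n + 1)] (ξ n) :=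
  Measurable.of_comap_le (le_iSup₂ (f := fun i (_ : i ∈ Set.Iio (n + 1)) => mΩ.comap (ξ i))
    n (Set.mem_Iio.2 n.lt_succ_self))

theorem indep_noisePast [MeasurableSpace Ω'] (hξ : ∀ n, Measurable (ξ n)) {P' : Measure Ω'}
    (hind : iIndepFun ξ P') (n : ℕ) : Indep (noisePast ξ n) (mΩ.comap (ξ n)) P' := by
  have := indep_iSup_of_disjoint (fun i => (hξ i).comap_le)
    ((iIndepFun_iff_iIndep _ _ _).1 hind) (S := Set.Iio n) (T := {n}) (by simp)
  rwa [iSup_singleton] at this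

variable [MeasurableSpace E] {T : E → Ω → E} {X : ℕ → Ω' → E} {x₀ : E}

theorem measurable_noisePast_of_iterate (hT : Measurable (Function.uncurry T))
    (hX0 : ∀ ω, X 0 ω = x₀) (hX : ∀ n ω, X (n + 1) ω = T (X n ω) (ξ n ω)) (n : ℕ) :
    Measurable[noisePast ξ n] (X n) := by
  induction n with
  | zero => simp [funext hX0]
  | succ n ih =>
    rw [funext (hX n)]
    exact hT.comp ((ih.mono (noisePast_mono n.le_succ) le_rfl).prodMk
      (measurable_noise_noisePast_succ n))

variable [MeasurableSpace Ω'] {P : Measure Ω} {P' : Measure Ω'} [IsProbabilityMeasure P']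
  {V : E → ℝ≥0∞} {S : Set E}

theorem setLIntegral_iterate_succ_le (hξ : ∀ n, Measurable (ξ n)) (hind : iIndepFun ξ P')
    (hlaw : ∀ n, P'.map (ξ n) = P) (hT : Measurable (Function.uncurry T)) (hV : Measurable V)
    (hX0 : ∀ ω, X 0 ω = x₀) (hX : ∀ n ω, X (n + 1) ω = T (X n ω) (ξ n ω))
    (hdesc : ∀ x ∈ S, ∫⁻ y, V (T x y) ∂P ≤ V x) {n : ℕ} {A : Set Ω'}
    (hA : MeasurableSet[noisePast ξ n] A) (hAS : ∀ ω ∈ A, X n ω ∈ S) :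
    ∫⁻ ω in A, V (X (n + 1) ω) ∂P' ≤ ∫⁻ ω in A, V (X n ω) ∂P' := by
  have hXn := measurable_noisePast_of_iterate hT hX0 hX n
  -- `A` and `X n` are determined by the past noise, so they can be frozen while integrating
  -- over the independent fresh noise `ξ n`.
  set Z : Ω' → ℝ≥0∞ × E := fun ω => (A.indicator 1 ω, X n ω)
  have hindicator : Measurable[noisePast ξ n] (A.indicator (1 : Ω' → ℝ≥0∞)) :=
    (measurable_const : Measurable[noisePast ξ n] fun _ : Ω' => (1 : ℝ≥0∞)).indicator hA
  have hZ : Measurable[noisePast ξ n] Z := hindicator.prodMk hXn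
  have hZξ : IndepFun Z (ξ n) P' := (IndepFun_iff_Indep _ _ _).2
    (indep_of_indep_of_le_left (indep_noisePast hξ hind n) hZ.comap_le)
  have hF : Measurable (Function.uncurry fun (p : ℝ≥0∞ × E) y => p.1 * V (T p.2 y)) :=
    measurable_fst.fst.mul (hV.comp (hT.comp (measurable_fst.snd.prodMk measurable_snd)))
  have hle := noisePast_le hξ n
  rw [← lintegral_indicator (hle _ hA), ← lintegral_indicator (hle _ hA)]
  calc ∫⁻ ω, A.indicator (fun ω => V (X (n + 1) ω)) ω ∂P'
      = ∫⁻ ω, (Z ω).1 * V (T (Z ω).2 (ξ n ω)) ∂P' := by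
        congr 1 with ω
        by_cases h : ω ∈ A <;> simp [Z, h, hX]
    _ = ∫⁻ ω, ∫⁻ y, (Z ω).1 * V (T (Z ω).2 y) ∂P ∂P' := by
        rw [lintegral_comp_eq_of_indepFun (hZ.mono hle le_rfl) (hξ n) hZξ hF, hlaw]
    _ ≤ ∫⁻ ω, A.indicator (fun ω => V (X n ω)) ω ∂P' := by
        refine lintegral_mono fun ω => ?_
        by_cases h : ω ∈ A
        · simpa [Z, h] using hdesc _ (hAS ω h)
        · simp [Z, h]

/-- Ville's maximal inequality for the nonnegative supermartingale `V (X n)` stopped on leaving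
`S`. -/
theorem mul_measure_exit_le (hξ : ∀ n, Measurable (ξ n)) (hind : iIndepFun ξ P')
    (hlaw : ∀ n, P'.map (ξ n) = P) (hT : Measurable (Function.uncurry T)) (hV : Measurable V)
    (hS : MeasurableSet S) (hX0 : ∀ ω, X 0 ω = x₀) (hX : ∀ n ω, X (n + 1) ω = T (X n ω) (ξ n ω))
    {δ : ℝ≥0∞} (hSδ : ∀ x ∈ S, V x < δ) (hdesc : ∀ x ∈ S, ∫⁻ y, V (T x y) ∂P ≤ V x) :
    δ * P' {ω | ∃ N, δ ≤ V (X N ω) ∧ ∀ n < N, X n ω ∈ S} ≤ V x₀ := by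
  set alive : ℕ → Set Ω' := fun n => {ω | ∀ k < n, X k ω ∈ S}
  set exit : ℕ → Set Ω' := fun n => alive n ∩ {ω | δ ≤ V (X n ω)}
  set W : ℕ → ℝ≥0∞ := fun n => ∫⁻ ω in alive n, V (X n ω) ∂P'
  have hVX : ∀ n, Measurable fun ω => V (X n ω) := fun n =>
    hV.comp ((measurable_noisePast_of_iterate hT hX0 hX n).mono (noisePast_le hξ n) le_rfl)
  have halive : ∀ n, MeasurableSet[noisePast ξ n] (alive (n + 1)) := by
    intro n
    simp only [alive, Set.ofPred_forall]
    exact .iInter fun k => .iInter fun hk => (measurable_noisePast_of_iterate hT hX0 hX k).mono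
      (noisePast_mono (Nat.le_of_lt_succ hk)) le_rfl hS
  have hstep : ∀ n, δ * P' (exit n) + W (n + 1) ≤ W n := by
    intro n
    have hdisj : Disjoint (exit n) (alive (n + 1)) := Set.disjoint_left.2 fun ω hω₁ hω₂ =>
      (hSδ _ (hω₂ n n.lt_succ_self)).not_ge hω₁.2
    calc δ * P' (exit n) + W (n + 1)
        ≤ ∫⁻ ω in exit n, V (X n ω) ∂P' + ∫⁻ ω in alive (n + 1), V (X n ω) ∂P' := by
          refine add_le_add ?_ (setLIntegral_iterate_succ_le hξ hind hlaw hT hV hX0 hX hdesc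
            (halive n) fun ω h => h n n.lt_succ_self)
          rw [← setLIntegral_const]
          exact setLIntegral_mono (hVX n) fun ω h => h.2
      _ = ∫⁻ ω in exit n ∪ alive (n + 1), V (X n ω) ∂P' :=
          (lintegral_union (noisePast_le hξ n _ (halive n)) hdisj).symm
      _ ≤ W n := lintegral_mono_set (Set.union_subset Set.inter_subset_left
          fun ω h k hk => h k (hk.trans n.lt_succ_self))
  have hW0 : W 0 = V x₀ := by simp [W, alive, hX0]
  calc δ * P' {ω | ∃ N, δ ≤ V (X N ω) ∧ ∀ n < N, X n ω ∈ S}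
      = δ * P' (⋃ n, exit n) := by
        congr 2; ext ω; simp [exit, alive, and_comm]
    _ ≤ ∑' n, δ * P' (exit n) := by
        rw [ENNReal.tsum_mul_left]; gcongr; exact measure_iUnion_le _
    _ ≤ V x₀ := hW0 ▸ ENNReal.tsum_le_of_add_le hstep

end NoiseDrivenChain

theorem stmt0_general
    (d : ℕ)
    (f : EuclideanSpace ℝ (Fin d) → ℝ) (hf : Differentiable ℝ f)
    (L : ℝ) (hL : 0 < L)
    (hsmooth : ∀ x y : EuclideanSpace ℝ (Fin d),
      ‖gradient f x - gradient f y‖ ≤ L * ‖x - y‖)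
    (hfnonneg : ∀ x, 0 ≤ f x)
    (δf μ : ℝ) (hδf : 0 < δf) (hμ : 0 < μ)
    (hPL : ∀ x, f x < δf → 2 * μ * f x ≤ ‖gradient f x‖ ^ 2)
    (Ω : Type*) [MeasurableSpace Ω] (P : Measure Ω) [IsProbabilityMeasure P]
    (g : EuclideanSpace ℝ (Fin d) → Ω → EuclideanSpace ℝ (Fin d))
    (hgmeas : Measurable (Function.uncurry g))
    (σ : ℝ)
    (hgint : ∀ x, Integrable (g x) P)
    (hunbiased : ∀ x, ∫ ω, g x ω ∂P = gradient f x)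
    (hvarint : ∀ x i, Integrable (fun ω => |g x ω i - gradient f x i| ^ 2) P)
    (hvar : ∀ x i, ∫ ω, |g x ω i - gradient f x i| ^ 2 ∂P ≤ σ ^ 2)
    (Ω' : Type*) [MeasurableSpace Ω'] (P' : Measure Ω') [IsProbabilityMeasure P']
    (ξ : ℕ → Ω' → Ω) (hξmeas : ∀ n, Measurable (ξ n))
    (hiid : iIndepFun ξ P')
    (hlaw : ∀ n, P'.map (ξ n) = P)
    (θ1 : EuclideanSpace ℝ (Fin d))
    (a : ℝ) (ha0 : 0 < a)
    (ha : a < min (1 / L) (2 * μ * δf / (L * σ ^ 2 * d)))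
    (θ : ℕ → Ω' → EuclideanSpace ℝ (Fin d))
    (hθinit : ∀ ω, θ 1 ω = θ1)
    (hθrec : ∀ n, 1 ≤ n → ∀ ω, θ (n + 1) ω = θ n ω - a • g (θ n ω) (ξ n ω)) :
    P' {ω | ∃ N, 1 ≤ N ∧ δf ≤ f (θ N ω) ∧
          ∀ n, 1 ≤ n → n < N →
            f (θ n ω) < δf ∧ L * a * σ ^ 2 * d / μ < f (θ n ω)}
      ≤ ENNReal.ofReal (f θ1 / δf) := by
  have haL : a * L ≤ 1 := by
    have := (lt_min_iff.1 ha).1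
    rw [lt_div_iff₀ hL] at this
    linarith
  have hexit := mul_measure_exit_le (ξ := fun n => ξ (n + 1)) (X := fun n => θ (n + 1))
    (T := fun x y => x - a • g x y) (V := fun x => ENNReal.ofReal (f x))
    (S := {x | f x < δf ∧ L * a * σ ^ 2 * d / μ < f x}) (δ := ENNReal.ofReal δf)
    (fun n => hξmeas (n + 1))
    ((iIndepFun_iff_iIndep _ _ _).2 (((iIndepFun_iff_iIndep _ _ _).1 hiid).precomp
      Nat.succ_injective))
    (fun n => hlaw (n + 1)) (measurable_fst.sub (hgmeas.const_smul a))
    (ENNReal.measurable_ofReal.comp hf.continuous.measurable)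
    ((measurableSet_lt hf.continuous.measurable measurable_const).inter
      (measurableSet_lt measurable_const hf.continuous.measurable))
    hθinit (fun n => hθrec (n + 1) n.succ_pos)
    (fun x hx => (ENNReal.ofReal_lt_ofReal_iff hδf).2 hx.1)
    (fun x hx => lintegral_ofReal_noisyGradientStep_le hf hfnonneg hL.le hsmooth hμ ha0 haL
      (hgint x) (hunbiased x) (hvarint x) (hvar x) (hPL x hx.1) (by simpa using hx.2))
  rw [ENNReal.ofReal_div_of_pos hδf,
    ENNReal.le_div_iff_mul_le (.inl (by simpa using hδf)) (.inl ENNReal.ofReal_ne_top), mul_comm]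
  refine le_trans (mul_le_mul_right (measure_mono ?_) _) hexit
  rintro ω ⟨N, hN, hexitN, halive⟩
  obtain ⟨M, rfl⟩ := Nat.exists_eq_add_of_le' hN
  exact ⟨M, ENNReal.ofReal_le_ofReal hexitN, fun n hn => halive (n + 1) n.succ_pos (by omega)⟩

/-- stochastic stability of noisy gradient descent, Lemma 3.1.
Let `f : ℝ^d → ℝ` be `L`-smooth, satisfy the local PL condition with constants `δf, μ > 0`
(global minimum value normalized to `0`), and let `g` be an unbiased gradient estimate with
componentwise noise second moment at most `σ²`.  For the noisy GD iterates
`θ_{n+1} = θ_n - a g(θ_n, ξ_n)` with i.i.d. noise `ξ_n`, deterministic initial point `θ₁`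
with `f(θ₁) < δf`, and learning rate `a < min{1/L, 2μδf/(Lσ²d)}`, the probability that
the iterates leave the sublevel set `f⁻¹([0,δf))` before reaching a loss `≤ Laσ²d/μ`
is at most `f(θ₁)/δf`. -/
theorem stmt0
    (d : ℕ) (hd : 1 ≤ d)
    (f : EuclideanSpace ℝ (Fin d) → ℝ) (hf : Differentiable ℝ f)
    (L : ℝ) (hL : 0 < L)
    (hsmooth : ∀ x y : EuclideanSpace ℝ (Fin d),
      ‖gradient f x - gradient f y‖ ≤ L * ‖x - y‖)
    (hfnonneg : ∀ x, 0 ≤ f x) (hfmin : ∃ x, f x = 0)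
    (δf μ : ℝ) (hδf : 0 < δf) (hμ : 0 < μ)
    (hPL : ∀ x, f x < δf → 2 * μ * f x ≤ ‖gradient f x‖ ^ 2)
    (Ω : Type*) [MeasurableSpace Ω] (P : Measure Ω) [IsProbabilityMeasure P]
    (g : EuclideanSpace ℝ (Fin d) → Ω → EuclideanSpace ℝ (Fin d))
    (hgmeas : Measurable (Function.uncurry g))
    (σ : ℝ) (hσ : 0 < σ)
    (hgint : ∀ x, Integrable (g x) P)
    (hunbiased : ∀ x, ∫ ω, g x ω ∂P = gradient f x)
    (hvarint : ∀ x i, Integrable (fun ω => |g x ω i - gradient f x i| ^ 2) P)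
    (hvar : ∀ x i, ∫ ω, |g x ω i - gradient f x i| ^ 2 ∂P ≤ σ ^ 2)
    (Ω' : Type*) [MeasurableSpace Ω'] (P' : Measure Ω') [IsProbabilityMeasure P']
    (ξ : ℕ → Ω' → Ω) (hξmeas : ∀ n, Measurable (ξ n))
    (hiid : iIndepFun ξ P')
    (hlaw : ∀ n, P'.map (ξ n) = P)
    (θ1 : EuclideanSpace ℝ (Fin d)) (hθ1 : f θ1 < δf)
    (a : ℝ) (ha0 : 0 < a)
    (ha : a < min (1 / L) (2 * μ * δf / (L * σ ^ 2 * d)))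
    (θ : ℕ → Ω' → EuclideanSpace ℝ (Fin d))
    (hθinit : ∀ ω, θ 1 ω = θ1)
    (hθrec : ∀ n, 1 ≤ n → ∀ ω, θ (n + 1) ω = θ n ω - a • g (θ n ω) (ξ n ω)) :
    P' {ω | ∃ N, 1 ≤ N ∧ δf ≤ f (θ N ω) ∧
          ∀ n, 1 ≤ n → n < N →
            f (θ n ω) < δf ∧ L * a * σ ^ 2 * d / μ < f (θ n ω)}
      ≤ ENNReal.ofReal (f θ1 / δf) :=
  stmt0_general d f hf L hL hsmooth hfnonneg δf μ hδf hμ hPL Ω P g hgmeas σ hgint hunbiased hvarint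
    hvar Ω' P' ξ hξmeas hiid hlaw θ1 a ha0 ha θ hθinit hθrec
end

section
/- Let d ≥ 1, let f : ℝ^d → ℝ be differentiable and L_i-smooth with respect to each coordinate i, with L_max = max_i L_i and L_avg = (1/d)Σ_i L_i. Fix θ ∈ ℝ^d and let G : Ω → ℝ^d be a random vector on a probability space (Ω, 𝔉, P) such that E[G_i] = ∂_i f(θ) and E[|G_i − ∂_i f(θ)|²] ≤ σ² for every coordinate 1 ≤ i ≤ d, where σ > 0. Then for every a > 0, (1/d) Σ_{i=1}^d E[ f(θ − a G_i e_i) ] ≤ f(θ) − (a/d) ‖∇f(θ)‖₂² + (L_max a²/(2d)) ‖∇f(θ)‖₂² + (L_avg a² σ²)/2, where e_i is the i-th standard basis vector. -/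
/-!
Along the line `t ↦ θ + t eᵢ` the function `f` has an `Lᵢ`-Lipschitz derivative, so
`|f(θ + t eᵢ) - f(θ) - t ∂ᵢf(θ)| ≤ Lᵢ t²/2`. Taking `t = -a Gᵢ` and expectations, the linear term
gives `-a (∂ᵢf(θ))²` by unbiasedness and the quadratic term is controlled by the second moment
`E[Gᵢ²] = E[(Gᵢ - ∂ᵢf(θ))²] + (∂ᵢf(θ))² ≤ σ² + (∂ᵢf(θ))²`. Averaging over `i` and bounding
`Lᵢ (∂ᵢf(θ))² ≤ L_max (∂ᵢf(θ))²` gives the claim.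
-/

open MeasureTheory

theorem abs_sub_sub_mul_deriv_le_of_nonneg {g g' : ℝ → ℝ} (hg : ∀ s, HasDerivAt g (g' s) s)
    {L : ℝ} (hL : ∀ s, |g' s - g' 0| ≤ L * |s|) {t : ℝ} (ht : 0 ≤ t) :
    |g t - g 0 - t * g' 0| ≤ L * t ^ 2 / 2 := by
  have hφ : ∀ s, HasDerivAt (fun s => g s - g 0 - s * g' 0) (g' s - g' 0) s := fun s =>
    ((hg s).sub_const (g 0)).sub (hasDerivAt_mul_const (g' 0))
  have hB : ∀ s, HasDerivAt (fun s => L * s ^ 2 / 2) (L * s) s := fun s =>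
    (((hasDerivAt_pow 2 s).const_mul L).div_const 2).congr_deriv (by push_cast; ring)
  refine image_norm_le_of_norm_deriv_right_le_deriv_boundary (a := 0) (b := t)
    (fun s _ => (hφ s).continuousAt.continuousWithinAt) (fun s _ => (hφ s).hasDerivWithinAt)
    (by simp) hB (fun s hs => ?_) ⟨ht, le_rfl⟩
  simpa [abs_of_nonneg hs.1] using hL s

theorem abs_sub_sub_mul_deriv_le {g g' : ℝ → ℝ} (hg : ∀ s, HasDerivAt g (g' s) s)
    {L : ℝ} (hL : ∀ s, |g' s - g' 0| ≤ L * |s|) (t : ℝ) :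
    |g t - g 0 - t * g' 0| ≤ L * t ^ 2 / 2 := by
  rcases le_total 0 t with ht | ht
  · exact abs_sub_sub_mul_deriv_le_of_nonneg hg hL ht
  · have hg_neg : ∀ s, HasDerivAt (fun s => g (-s)) (-g' (-s)) s := fun s =>
      ((hg (-s)).comp s (hasDerivAt_neg' s)).congr_deriv (by ring)
    have hL_neg : ∀ s, |-g' (-s) - -g' (-0)| ≤ L * |s| := fun s => by
      simpa [abs_sub_comm, neg_add_eq_sub] using hL (-s)
    simpa using abs_sub_sub_mul_deriv_le_of_nonneg hg_neg hL_neg (neg_nonneg.2 ht)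

theorem abs_sub_sub_inner_gradient_le {E : Type*} [NormedAddCommGroup E] [InnerProductSpace ℝ E]
    [CompleteSpace E] {f : E → ℝ} (hf : Differentiable ℝ f) {x v : E} {L : ℝ}
    (hL : ∀ s : ℝ, |inner ℝ (gradient f (x + s • v)) v - inner ℝ (gradient f x) v| ≤ L * |s|)
    (t : ℝ) :
    |f (x + t • v) - f x - t * inner ℝ (gradient f x) v| ≤ L * t ^ 2 / 2 := by
  have hline : ∀ s : ℝ,
      HasDerivAt (fun s => f (x + s • v)) (inner ℝ (gradient f (x + s • v)) v) s := fun s => by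
    have := (hf (x + s • v)).hasFDerivAt.comp_hasDerivAt s
      (((hasDerivAt_id' s).smul_const v).const_add x)
    rwa [one_smul, ← InnerProductSpace.toDual_symm_apply] at this
  simpa using abs_sub_sub_mul_deriv_le hline (by simpa using hL) t

theorem EuclideanSpace.abs_sub_sub_coord_gradient_le {ι : Type*} [Fintype ι] [DecidableEq ι]
    {f : EuclideanSpace ℝ ι → ℝ} (hf : Differentiable ℝ f) {x : EuclideanSpace ℝ ι} {i : ι}
    {L : ℝ}
    (hL : ∀ s : ℝ, |gradient f (x + s • EuclideanSpace.single i 1) i - gradient f x i| ≤ L * |s|)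
    (t : ℝ) :
    |f (x + t • EuclideanSpace.single i 1) - f x - t * gradient f x i| ≤ L * t ^ 2 / 2 := by
  have h := abs_sub_sub_inner_gradient_le hf (v := EuclideanSpace.single i 1) (L := L)
    (by simpa only [EuclideanSpace.inner_single_right, one_mul, conj_trivial] using hL) t
  simpa only [EuclideanSpace.inner_single_right, one_mul, conj_trivial] using h

theorem fun_sq_eq_sq_sub_add {Ω : Type*} (X : Ω → ℝ) (m : ℝ) :
    (fun ω => X ω ^ 2) = fun ω => (X ω - m) ^ 2 + 2 * m * X ω - m ^ 2 :=
  funext fun _ => by ring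

section Moments

variable {Ω : Type*} [MeasurableSpace Ω] {P : Measure Ω} {X : Ω → ℝ} {m : ℝ}

theorem integrable_sq_of_integrable_sq_sub [IsFiniteMeasure P] (hX : Integrable X P)
    (hXm : Integrable (fun ω => (X ω - m) ^ 2) P) : Integrable (fun ω => X ω ^ 2) P := by
  rw [fun_sq_eq_sq_sub_add X m]
  exact (hXm.add (hX.const_mul _)).sub (integrable_const _)

theorem integral_sq_eq_integral_sq_sub_add [IsProbabilityMeasure P] (hX : Integrable X P)
    (hmean : ∫ ω, X ω ∂P = m) (hXm : Integrable (fun ω => (X ω - m) ^ 2) P) :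
    ∫ ω, X ω ^ 2 ∂P = ∫ ω, (X ω - m) ^ 2 ∂P + m ^ 2 := by
  have hlin : Integrable (fun ω => (X ω - m) ^ 2 + 2 * m * X ω) P := hXm.add (hX.const_mul _)
  rw [fun_sq_eq_sq_sub_add X m, integral_sub hlin (integrable_const _),
    integral_add hXm (hX.const_mul _), integral_const_mul, hmean]
  simp only [integral_const, probReal_univ, one_smul]
  ring

end Moments

section QuadraticBound

variable {Ω : Type*} [MeasurableSpace Ω] {P : Measure Ω} {φ : ℝ → ℝ} {c L : ℝ} {X : Ω → ℝ}

theorem integrable_comp_of_abs_sub_sub_le [IsFiniteMeasure P] (hφ : Continuous φ)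
    (hbound : ∀ t, |φ t - φ 0 - t * c| ≤ L * t ^ 2 / 2) (hX : Integrable X P)
    (hX2 : Integrable (fun ω => X ω ^ 2) P) : Integrable (fun ω => φ (X ω)) P := by
  refine Integrable.mono' (((integrable_const (φ 0)).add (hX.mul_const c)).abs.add
    (hX2.const_mul (L / 2))) (hφ.comp_aestronglyMeasurable hX.aestronglyMeasurable) ?_
  filter_upwards with ω
  rw [Real.norm_eq_abs]
  show |φ (X ω)| ≤ |φ 0 + X ω * c| + L / 2 * X ω ^ 2
  have hb := hbound (X ω)
  have htri := abs_sub_abs_le_abs_sub (φ (X ω)) (φ 0 + X ω * c)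
  rw [← sub_sub] at htri
  linarith

theorem integral_comp_le_of_abs_sub_sub_le [IsProbabilityMeasure P] (hφ : Continuous φ)
    (hbound : ∀ t, |φ t - φ 0 - t * c| ≤ L * t ^ 2 / 2) (hX : Integrable X P)
    (hX2 : Integrable (fun ω => X ω ^ 2) P) :
    ∫ ω, φ (X ω) ∂P ≤ φ 0 + c * ∫ ω, X ω ∂P + L / 2 * ∫ ω, X ω ^ 2 ∂P := by
  have hlin : Integrable (fun ω => φ 0 + c * X ω) P := (integrable_const _).add (hX.const_mul c)
  calc ∫ ω, φ (X ω) ∂P ≤ ∫ ω, (φ 0 + c * X ω + L / 2 * X ω ^ 2) ∂P := by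
        refine integral_mono (integrable_comp_of_abs_sub_sub_le hφ hbound hX hX2)
          (hlin.add (hX2.const_mul _)) fun ω => ?_
        linarith [(abs_le.mp (hbound (X ω))).2]
    _ = φ 0 + c * ∫ ω, X ω ∂P + L / 2 * ∫ ω, X ω ^ 2 ∂P := by
        rw [integral_add hlin (hX2.const_mul _),
          integral_add (integrable_const _) (hX.const_mul c), integral_const_mul,
          integral_const_mul]
        simp

end QuadraticBound

theorem EuclideanSpace.integral_comp_sub_smul_single_le {ι Ω : Type*} [Fintype ι] [DecidableEq ι]
    [MeasurableSpace Ω] {P : Measure Ω} [IsProbabilityMeasure P]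
    {f : EuclideanSpace ℝ ι → ℝ} (hf : Differentiable ℝ f) {θ : EuclideanSpace ℝ ι} {i : ι}
    {L : ℝ}
    (hL : ∀ s : ℝ, |gradient f (θ + s • EuclideanSpace.single i 1) i - gradient f θ i| ≤ L * |s|)
    {Y : Ω → ℝ} (hY : Integrable Y P) (hmean : ∫ ω, Y ω ∂P = gradient f θ i)
    (hvar : Integrable (fun ω => (Y ω - gradient f θ i) ^ 2) P) (a : ℝ) :
    ∫ ω, f (θ - (a * Y ω) • EuclideanSpace.single i 1) ∂P
      ≤ f θ - a * gradient f θ i ^ 2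
        + L * a ^ 2 / 2 * (∫ ω, (Y ω - gradient f θ i) ^ 2 ∂P + gradient f θ i ^ 2) := by
  set e : EuclideanSpace ℝ ι := EuclideanSpace.single i 1
  have hline : Continuous fun t : ℝ => f (θ + t • e) := hf.continuous.comp (by fun_prop)
  have hY2 : Integrable (fun ω => Y ω ^ 2) P := integrable_sq_of_integrable_sq_sub hY hvar
  have h := integral_comp_le_of_abs_sub_sub_le (X := fun ω => -(a * Y ω)) hline
    (fun t => by simpa using EuclideanSpace.abs_sub_sub_coord_gradient_le hf hL t)
    (hY.const_mul a).neg ((hY2.const_mul (a ^ 2)).congr (ae_of_all _ fun ω => by ring))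
  simp only [neg_smul, ← sub_eq_add_neg, zero_smul, add_zero, neg_sq, mul_pow, integral_neg,
    integral_const_mul, hmean, integral_sq_eq_integral_sq_sub_add hY hmean hvar] at h
  linarith

theorem stmt8_general
    (d : ℕ) (hd : 1 ≤ d)
    (f : EuclideanSpace ℝ (Fin d) → ℝ) (hf : Differentiable ℝ f)
    (Li : Fin d → ℝ)
    (hLi : ∀ (i : Fin d) (θ : EuclideanSpace ℝ (Fin d)) (h : ℝ),
      |gradient f (θ + h • EuclideanSpace.single i (1 : ℝ)) i - gradient f θ i| ≤ Li i * |h|)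
    (Lmax Lavg : ℝ)
    (hLmax : Lmax = Finset.univ.sup' (Finset.univ_nonempty_iff.mpr ⟨⟨0, hd⟩⟩) Li)
    (hLavg : Lavg = (∑ i, Li i) / d)
    (θ : EuclideanSpace ℝ (Fin d))
    (Ω : Type*) [MeasurableSpace Ω] (P : Measure Ω) [IsProbabilityMeasure P]
    (G : Ω → EuclideanSpace ℝ (Fin d))
    (σ : ℝ)
    (hmeanint : ∀ i : Fin d, Integrable (fun ω => G ω i) P)
    (hmean : ∀ i : Fin d, ∫ ω, G ω i ∂P = gradient f θ i)
    (hvarint : ∀ i : Fin d, Integrable (fun ω => |G ω i - gradient f θ i| ^ 2) P)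
    (hvar : ∀ i : Fin d, ∫ ω, |G ω i - gradient f θ i| ^ 2 ∂P ≤ σ ^ 2)
    (a : ℝ) :
    (1 / d) * ∑ i : Fin d, ∫ ω, f (θ - (a * G ω i) • EuclideanSpace.single i (1 : ℝ)) ∂P
      ≤ f θ - a / d * ‖gradient f θ‖ ^ 2
        + Lmax * a ^ 2 / (2 * d) * ‖gradient f θ‖ ^ 2
        + Lavg * a ^ 2 * σ ^ 2 / 2 := by
  set g := gradient f θ
  simp only [sq_abs] at hvarint hvar
  have hLi_nonneg (i : Fin d) : 0 ≤ Li i := (abs_nonneg _).trans (by simpa using hLi i θ 1)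
  have hLi_le (i : Fin d) : Li i ≤ Lmax := hLmax ▸ Finset.le_sup' Li (Finset.mem_univ i)
  have hcoord (i : Fin d) : ∫ ω, f (θ - (a * G ω i) • EuclideanSpace.single i 1) ∂P
      ≤ f θ - a * g i ^ 2 + a ^ 2 / 2 * (Lmax * g i ^ 2 + σ ^ 2 * Li i) := by
    refine (EuclideanSpace.integral_comp_sub_smul_single_le hf (hLi i θ) (hmeanint i) (hmean i)
      (hvarint i) a).trans ?_
    have hV := mul_le_mul_of_nonneg_left (hvar i) (hLi_nonneg i)
    have hG := mul_le_mul_of_nonneg_right (hLi_le i) (sq_nonneg (g i))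
    linear_combination (a ^ 2 / 2) * (hV + hG)
  have hd0 : (0 : ℝ) < d := by exact_mod_cast hd
  calc (1 / d) * ∑ i, ∫ ω, f (θ - (a * G ω i) • EuclideanSpace.single i 1) ∂P
      ≤ (1 / d) * ∑ i, (f θ - a * g i ^ 2 + a ^ 2 / 2 * (Lmax * g i ^ 2 + σ ^ 2 * Li i)) := by
        gcongr with i; exact hcoord i
    _ = _ := by
        simp only [Finset.sum_add_distrib, Finset.sum_sub_distrib, ← Finset.mul_sum,
          Finset.sum_const, Finset.card_univ, Fintype.card_fin, nsmul_eq_mul,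
          ← EuclideanSpace.real_norm_sq_eq, hLavg]
        field_simp
        ring

/-- one-step descent inequality for noisy randomized coordinate descent.
If `f : ℝ^d → ℝ` is differentiable and `Lᵢ`-smooth with respect to each coordinate `i`
(with `Lmax` the maximum and `Lavg` the average of the `Lᵢ`), and `G` is a random vector
with `E[Gᵢ] = ∂ᵢ f(θ)` and `E[|Gᵢ - ∂ᵢ f(θ)|²] ≤ σ²` for each `i`, then for every `a > 0`,
`(1/d) Σᵢ E[f(θ - a Gᵢ eᵢ)]
  ≤ f(θ) - (a/d)‖∇f(θ)‖² + (Lmax a²/(2d))‖∇f(θ)‖² + Lavg a² σ²/2`. -/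
theorem stmt8
    (d : ℕ) (hd : 1 ≤ d)
    (f : EuclideanSpace ℝ (Fin d) → ℝ) (hf : Differentiable ℝ f)
    (Li : Fin d → ℝ)
    (hLi : ∀ (i : Fin d) (θ : EuclideanSpace ℝ (Fin d)) (h : ℝ),
      |gradient f (θ + h • EuclideanSpace.single i (1 : ℝ)) i - gradient f θ i| ≤ Li i * |h|)
    (Lmax Lavg : ℝ)
    (hLmax : Lmax = Finset.univ.sup' (Finset.univ_nonempty_iff.mpr ⟨⟨0, hd⟩⟩) Li)
    (hLavg : Lavg = (∑ i, Li i) / d)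
    (θ : EuclideanSpace ℝ (Fin d))
    (Ω : Type*) [MeasurableSpace Ω] (P : Measure Ω) [IsProbabilityMeasure P]
    (G : Ω → EuclideanSpace ℝ (Fin d)) (hGmeas : Measurable G)
    (σ : ℝ) (hσ : 0 < σ)
    (hmeanint : ∀ i : Fin d, Integrable (fun ω => G ω i) P)
    (hmean : ∀ i : Fin d, ∫ ω, G ω i ∂P = gradient f θ i)
    (hvarint : ∀ i : Fin d, Integrable (fun ω => |G ω i - gradient f θ i| ^ 2) P)
    (hvar : ∀ i : Fin d, ∫ ω, |G ω i - gradient f θ i| ^ 2 ∂P ≤ σ ^ 2)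
    (a : ℝ) (ha : 0 < a) :
    (1 / d) * ∑ i : Fin d, ∫ ω, f (θ - (a * G ω i) • EuclideanSpace.single i (1 : ℝ)) ∂P
      ≤ f θ - a / d * ‖gradient f θ‖ ^ 2
        + Lmax * a ^ 2 / (2 * d) * ‖gradient f θ‖ ^ 2
        + Lavg * a ^ 2 * σ ^ 2 / 2 :=
  stmt8_general d hd f hf Li hLi Lmax Lavg hLmax hLavg θ Ω P G σ hmeanint hmean hvarint hvar a
end

section
/- Let d ≥ 1, let f : ℝ^d → ℝ be differentiable with f ≥ 0 and L_i-smooth with respect to each coordinate i, with L_max = max_i L_i and L_avg = (1/d)Σ_i L_i. Fix θ ∈ ℝ^d and let G : Ω → ℝ^d be a random vector on a probability space (Ω, 𝔉, P) such that E[G_i] = ∂_i f(θ) and E[|G_i − ∂_i f(θ)|²] ≤ σ² for every coordinate 1 ≤ i ≤ d, where σ > 0. Assume the PL inequality ‖∇f(θ)‖₂² ≥ 2μ f(θ) holds at θ for some μ > 0, that 0 < a ≤ 1/L_max, and that f(θ) > L_avg a σ² d / μ. Then (1/d) Σ_{i=1}^d E[ f(θ − a G_i e_i) ] ≤ (1 −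 μ a /(2d)) f(θ). -/
/-!
Along the coordinate direction `eᵢ`, `Lᵢ`-smoothness gives the descent inequality
`f (θ + h eᵢ) ≤ f θ + h ∂ᵢf θ + Lᵢ h² / 2`. Taking `h = -a Gᵢ` and expectations, with
`E Gᵢ = ∂ᵢf θ`, `E Gᵢ² ≤ (∂ᵢf θ)² + σ²` and `a Lᵢ ≤ 1`, yields
`E f (θ - a Gᵢ eᵢ) ≤ f θ - (a/2) (∂ᵢf θ)² + Lᵢ a² σ² / 2`. Averaging over `i`, the PL inequality
turns the gain into at least `(μ a / d) f θ`, and the lower bound on `f θ` makes the noise term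
`L_avg a² σ² / 2` at most half of it.
-/

open MeasureTheory

theorem apply_le_add_mul_deriv_add_sq {g g' : ℝ → ℝ} {L : ℝ}
    (hg : ∀ t, HasDerivAt g (g' t) t) (hg' : ∀ t, |g' t - g' 0| ≤ L * |t|) (h : ℝ) :
    g h ≤ g 0 + h * g' 0 + L * h ^ 2 / 2 := by
  set φ : ℝ → ℝ := fun t => g t - t * g' 0 - L * t ^ 2 / 2
  have hφ : ∀ t, HasDerivAt φ (g' t - g' 0 - L * t) t := by
    intro t
    refine (((hg t).sub ((hasDerivAt_id t).mul_const (g' 0))).sub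
      (((hasDerivAt_pow 2 t).const_mul L).div_const 2)).congr_deriv ?_
    norm_num
    ring
  have hφc : Continuous φ := continuous_iff_continuousAt.2 fun t => (hφ t).continuousAt
  -- `φ' t` has the sign of `-t`, so `φ` is maximal at `0`.
  suffices φ h ≤ φ 0 by simp only [φ] at this; linarith
  rcases le_total 0 h with h0 | h0
  · refine antitoneOn_of_hasDerivWithinAt_nonpos (convex_Ici 0) hφc.continuousOn
      (fun t _ => (hφ t).hasDerivWithinAt) (fun t ht => ?_) (Set.mem_Ici.2 le_rfl) h0 h0
    rw [interior_Ici, Set.mem_Ioi] at ht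
    have := hg' t
    rw [abs_of_pos ht] at this
    linarith [le_abs_self (g' t - g' 0)]
  · refine monotoneOn_of_hasDerivWithinAt_nonneg (convex_Iic 0) hφc.continuousOn
      (fun t _ => (hφ t).hasDerivWithinAt) (fun t ht => ?_) h0 (Set.mem_Iic.2 le_rfl) h0
    rw [interior_Iic, Set.mem_Iio] at ht
    have := hg' t
    rw [abs_of_neg ht] at this
    linarith [neg_abs_le (g' t - g' 0)]

theorem apply_add_smul_le_add_mul_fderiv_add_sq {E : Type*} [NormedAddCommGroup E]
    [NormedSpace ℝ E] {f : E → ℝ} (hf : Differentiable ℝ f) {x v : E} {L : ℝ}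
    (hL : ∀ h : ℝ, |fderiv ℝ f (x + h • v) v - fderiv ℝ f x v| ≤ L * |h|) (h : ℝ) :
    f (x + h • v) ≤ f x + h * fderiv ℝ f x v + L * h ^ 2 / 2 := by
  have hline (t : ℝ) : HasDerivAt (fun t : ℝ => f (x + t • v)) (fderiv ℝ f (x + t • v) v) t :=
    (hf _).hasFDerivAt.comp_hasDerivAt t <| by
      simpa using ((hasDerivAt_id t).smul_const v).const_add x
  simpa using apply_le_add_mul_deriv_add_sq hline (by simpa using hL) h

theorem EuclideanSpace.gradient_apply {ι : Type*} [Fintype ι] [DecidableEq ι]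
    (f : EuclideanSpace ℝ ι → ℝ) (x : EuclideanSpace ℝ ι) (i : ι) :
    gradient f x i = fderiv ℝ f x (EuclideanSpace.single i 1) := by
  rw [← inner_gradient_left, EuclideanSpace.inner_single_right]
  simp

section SecondMoment

variable {Ω : Type*} [MeasurableSpace Ω] {P : Measure Ω} {X : Ω → ℝ} {m : ℝ}

theorem integral_sq_eq_sq_add_integral_sq_sub [IsProbabilityMeasure P] (hX : Integrable X P)
    (hmean : ∫ ω, X ω ∂P = m) (hXm : Integrable (fun ω => (X ω - m) ^ 2) P) :
    ∫ ω, X ω ^ 2 ∂P = m ^ 2 + ∫ ω, (X ω - m) ^ 2 ∂P := by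
  have hsq : (fun ω => X ω ^ 2) = fun ω => (X ω - m) ^ 2 + 2 * m * X ω - m ^ 2 := by
    ext; ring
  have hint : Integrable (fun ω => (X ω - m) ^ 2 + 2 * m * X ω) P := hXm.add (hX.const_mul _)
  rw [hsq, integral_sub hint (integrable_const _), integral_add hXm (hX.const_mul _),
    integral_const_mul, hmean, integral_const]
  simp only [probReal_univ, one_smul]
  ring

end SecondMoment

theorem integral_apply_sub_smul_le {Ω E : Type*} [MeasurableSpace Ω] {P : Measure Ω}
    [IsProbabilityMeasure P] [NormedAddCommGroup E] [NormedSpace ℝ E]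
    {f : E → ℝ} (hf : Differentiable ℝ f) (hf0 : ∀ x, 0 ≤ f x) {x v : E} {L : ℝ}
    (hL : ∀ h : ℝ, |fderiv ℝ f (x + h • v) v - fderiv ℝ f x v| ≤ L * |h|)
    {X : Ω → ℝ} (hX : Integrable X P) (hmean : ∫ ω, X ω ∂P = fderiv ℝ f x v)
    (hXm : Integrable (fun ω => (X ω - fderiv ℝ f x v) ^ 2) P) {σ : ℝ}
    (hvar : ∫ ω, (X ω - fderiv ℝ f x v) ^ 2 ∂P ≤ σ ^ 2) {a : ℝ} (ha : 0 ≤ a) (haL : a * L ≤ 1) :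
    ∫ ω, f (x - (a * X ω) • v) ∂P ≤ f x - a / 2 * fderiv ℝ f x v ^ 2 + L * a ^ 2 * σ ^ 2 / 2 := by
  set m := fderiv ℝ f x v
  have hL0 : 0 ≤ L := by simpa using (abs_nonneg _).trans (hL 1)
  set B : Ω → ℝ := fun ω => f x - a * m * X ω + L * a ^ 2 / 2 * X ω ^ 2
  have hfB (ω : Ω) : f (x - (a * X ω) • v) ≤ B ω := by
    have := apply_add_smul_le_add_mul_fderiv_add_sq hf hL (-(a * X ω))
    rw [neg_smul, ← sub_eq_add_neg] at this
    exact this.trans_eq (by simp only [B, m]; ring)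
  have hlin : Integrable (fun ω => f x - a * m * X ω) P := (integrable_const _).sub (hX.const_mul _)
  have hquad : Integrable (fun ω => L * a ^ 2 / 2 * X ω ^ 2) P :=
    (integrable_sq_of_integrable_sq_sub hX hXm).const_mul _
  have hB : Integrable B P := hlin.add hquad
  -- integrability of `f (x - a X v)` comes from `0 ≤ f ≤ B`
  have hfX : Integrable (fun ω => f (x - (a * X ω) • v)) P := by
    refine hB.mono' ?_ (ae_of_all _ fun ω => ?_)
    · have hline : Continuous fun t : ℝ => x - (a * t) • v := by fun_prop
      exact (hf.continuous.comp hline).comp_aestronglyMeasurable hX.aestronglyMeasurable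
    · rw [Real.norm_eq_abs, abs_of_nonneg (hf0 _)]
      exact hfB ω
  have hBint :
      ∫ ω, B ω ∂P = f x - a * m ^ 2 + L * a ^ 2 / 2 * (m ^ 2 + ∫ ω, (X ω - m) ^ 2 ∂P) := by
    rw [integral_add hlin hquad, integral_sub (integrable_const _) (hX.const_mul _),
      integral_const_mul, integral_const_mul, hmean,
      integral_sq_eq_sq_add_integral_sq_sub hX hmean hXm, integral_const]
    simp only [probReal_univ, one_smul]
    ring
  calc ∫ ω, f (x - (a * X ω) • v) ∂P ≤ ∫ ω, B ω ∂P := integral_mono hfX hB hfB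
    _ ≤ f x - a / 2 * m ^ 2 + L * a ^ 2 * σ ^ 2 / 2 := by
      rw [hBint]
      have hnoise : L * a ^ 2 / 2 * ∫ ω, (X ω - m) ^ 2 ∂P ≤ L * a ^ 2 / 2 * σ ^ 2 :=
        mul_le_mul_of_nonneg_left hvar (by positivity)
      nlinarith [mul_le_mul_of_nonneg_right haL (mul_nonneg ha (sq_nonneg m))]

theorem stmt9_general
    (d : ℕ) (hd : 1 ≤ d)
    (f : EuclideanSpace ℝ (Fin d) → ℝ) (hf : Differentiable ℝ f)
    (hfnonneg : ∀ x, 0 ≤ f x)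
    (Li : Fin d → ℝ)
    (hLi : ∀ (i : Fin d) (θ : EuclideanSpace ℝ (Fin d)) (h : ℝ),
      |gradient f (θ + h • EuclideanSpace.single i (1 : ℝ)) i - gradient f θ i| ≤ Li i * |h|)
    (Lmax Lavg : ℝ)
    (hLmax : Lmax = Finset.univ.sup' (Finset.univ_nonempty_iff.mpr ⟨⟨0, hd⟩⟩) Li)
    (hLavg : Lavg = (∑ i, Li i) / d)
    (θ : EuclideanSpace ℝ (Fin d))
    (Ω : Type*) [MeasurableSpace Ω] (P : Measure Ω) [IsProbabilityMeasure P]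
    (G : Ω → EuclideanSpace ℝ (Fin d))
    (σ : ℝ)
    (hmeanint : ∀ i : Fin d, Integrable (fun ω => G ω i) P)
    (hmean : ∀ i : Fin d, ∫ ω, G ω i ∂P = gradient f θ i)
    (hvarint : ∀ i : Fin d, Integrable (fun ω => |G ω i - gradient f θ i| ^ 2) P)
    (hvar : ∀ i : Fin d, ∫ ω, |G ω i - gradient f θ i| ^ 2 ∂P ≤ σ ^ 2)
    (μ : ℝ) (hμ : 0 < μ)
    (hPL : 2 * μ * f θ ≤ ‖gradient f θ‖ ^ 2)
    (a : ℝ) (ha : 0 < a) (haL : a ≤ 1 / Lmax)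
    (hbig : Lavg * a * σ ^ 2 * d / μ < f θ) :
    (1 / d) * ∑ i : Fin d, ∫ ω, f (θ - (a * G ω i) • EuclideanSpace.single i (1 : ℝ)) ∂P
      ≤ (1 - μ * a / (2 * d)) * f θ := by
  have hd0 : (0 : ℝ) < d := by exact_mod_cast hd
  have hLmax0 : 0 < Lmax := by
    by_contra! h
    linarith [one_div_nonpos.2 h]
  have haLi (i : Fin d) : a * Li i ≤ 1 :=
    calc a * Li i ≤ a * Lmax :=
          mul_le_mul_of_nonneg_left (hLmax ▸ Finset.le_sup' Li (Finset.mem_univ i)) ha.le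
      _ ≤ 1 := (le_div_iff₀ hLmax0).1 haL
  have hcoord (i : Fin d) :
      ∫ ω, f (θ - (a * G ω i) • EuclideanSpace.single i (1 : ℝ)) ∂P
        ≤ f θ - a / 2 * gradient f θ i ^ 2 + Li i * a ^ 2 * σ ^ 2 / 2 := by
    simp only [EuclideanSpace.gradient_apply, sq_abs] at hLi hmean hvarint hvar ⊢
    exact integral_apply_sub_smul_le hf hfnonneg (hLi i θ) (hmeanint i) (hmean i) (hvarint i)
      (hvar i) ha.le (haLi i)
  have hsum : ∑ i, ∫ ω, f (θ - (a * G ω i) • EuclideanSpace.single i (1 : ℝ)) ∂P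
      ≤ d * f θ - a / 2 * ‖gradient f θ‖ ^ 2 + d * Lavg * a ^ 2 * σ ^ 2 / 2 := by
    refine (Finset.sum_le_sum fun i _ => hcoord i).trans_eq ?_
    rw [EuclideanSpace.real_norm_sq_eq, hLavg, Finset.sum_add_distrib, Finset.sum_sub_distrib,
      ← Finset.mul_sum]
    simp only [← Finset.sum_div, ← Finset.sum_mul, Finset.sum_const, Finset.card_univ,
      Fintype.card_fin, nsmul_eq_mul]
    field_simp
  have hnoise : d * Lavg * a ^ 2 * σ ^ 2 / 2 ≤ μ * a * f θ / 2 := by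
    rw [div_lt_iff₀ hμ] at hbig
    linarith [mul_le_mul_of_nonneg_left hbig.le (half_pos ha).le]
  have hPL' : a * μ * f θ ≤ a / 2 * ‖gradient f θ‖ ^ 2 := by
    linarith [mul_le_mul_of_nonneg_left hPL (half_pos ha).le]
  rw [one_div, inv_mul_le_iff₀ hd0]
  calc _ ≤ _ := hsum
    _ ≤ d * f θ - μ * a * f θ / 2 := by linarith
    _ = d * ((1 - μ * a / (2 * d)) * f θ) := by field_simp

/-- one-step contraction for noisy randomized coordinate descent under PL.
If `f : ℝ^d → ℝ` is differentiable, nonnegative and `Lᵢ`-smooth with respect to each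
coordinate (with `Lmax` the maximum and `Lavg` the average of the `Lᵢ`), `G` has
componentwise mean `∂ᵢ f(θ)` and noise second moment at most `σ²`, the PL inequality
`‖∇f(θ)‖² ≥ 2μ f(θ)` holds at `θ`, `0 < a ≤ 1/Lmax`, and `f(θ) > Lavg a σ² d / μ`,
then `(1/d) Σᵢ E[f(θ - a Gᵢ eᵢ)] ≤ (1 - μ a /(2d)) f(θ)`. -/
theorem stmt9
    (d : ℕ) (hd : 1 ≤ d)
    (f : EuclideanSpace ℝ (Fin d) → ℝ) (hf : Differentiable ℝ f)
    (hfnonneg : ∀ x, 0 ≤ f x)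
    (Li : Fin d → ℝ)
    (hLi : ∀ (i : Fin d) (θ : EuclideanSpace ℝ (Fin d)) (h : ℝ),
      |gradient f (θ + h • EuclideanSpace.single i (1 : ℝ)) i - gradient f θ i| ≤ Li i * |h|)
    (Lmax Lavg : ℝ)
    (hLmax : Lmax = Finset.univ.sup' (Finset.univ_nonempty_iff.mpr ⟨⟨0, hd⟩⟩) Li)
    (hLavg : Lavg = (∑ i, Li i) / d)
    (θ : EuclideanSpace ℝ (Fin d))
    (Ω : Type*) [MeasurableSpace Ω] (P : Measure Ω) [IsProbabilityMeasure P]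
    (G : Ω → EuclideanSpace ℝ (Fin d)) (hGmeas : Measurable G)
    (σ : ℝ) (hσ : 0 < σ)
    (hmeanint : ∀ i : Fin d, Integrable (fun ω => G ω i) P)
    (hmean : ∀ i : Fin d, ∫ ω, G ω i ∂P = gradient f θ i)
    (hvarint : ∀ i : Fin d, Integrable (fun ω => |G ω i - gradient f θ i| ^ 2) P)
    (hvar : ∀ i : Fin d, ∫ ω, |G ω i - gradient f θ i| ^ 2 ∂P ≤ σ ^ 2)
    (μ : ℝ) (hμ : 0 < μ)
    (hPL : 2 * μ * f θ ≤ ‖gradient f θ‖ ^ 2)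
    (a : ℝ) (ha : 0 < a) (haL : a ≤ 1 / Lmax)
    (hbig : Lavg * a * σ ^ 2 * d / μ < f θ) :
    (1 / d) * ∑ i : Fin d, ∫ ω, f (θ - (a * G ω i) • EuclideanSpace.single i (1 : ℝ)) ∂P
      ≤ (1 - μ * a / (2 * d)) * f θ :=
  stmt9_general d hd f hf hfnonneg Li hLi Lmax Lavg hLmax hLavg θ Ω P G σ hmeanint hmean hvarint
    hvar μ hμ hPL a ha haL hbig
end
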